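/- Fix α ≥ 0 and t > 0. Define the squared Bessel transition density q_t(x,y) = (1/2) t^{-α-1} y^α e^{-(x+y)/(2t)} h_α(√(xy)/t) for x, y ≥ 0, where h_α(z) = 2^{-α} ∑_{n≥0} (z/2)^{2n}/(n! Γ(n+α+1)). Then for all x, y > 0, the mixed second partial derivative ∂²/∂x∂y of log q_t(x,y) is strictly positive. -/

import Mathlib

/-- `h_α(z) = 2^{-α} ∑_{n≥0} (z/2)^{2n}/(n! Γ(n+α+1))`. -/
noncomputable def hA (α z : ℝ) : ℝ :=
  (2 : ℝ) ^ (-α) * ∑' n : ℕ, (z / 2) ^ (2 * n) / ((n.factorial : ℝ) * Real.Gamma ((n : ℝ) + α + 1))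

/-- The squared Bessel transition density of index `α`:
`q_t(x,y) = (1/2) t^{-α-1} y^α e^{-(x+y)/(2t)} h_α(√(xy)/t)`. -/
noncomputable def qK (α t x y : ℝ) : ℝ :=
  (1 / 2) * t ^ (-α - 1) * y ^ α * Real.exp (-(x + y) / (2 * t)) *
    hA α (Real.sqrt (x * y) / t)

/-!
Put `u = xy/t²`. Then `h_α(√(xy)/t) = F(u)` for the entire series `F(u) = ∑ bₙ uⁿ` with positive
coefficients `bₙ`, so `∂_y log q_t = α/y - 1/(2t) + M(u)/y`, where `M(u) = ∑ n bₙ uⁿ / ∑ bₙ uⁿ` is the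
mean of `n` under the weights `bₙ uⁿ`. Hence `∂_x ∂_y log q_t = M'(u)/t²`, and `u M'(u)` is the
variance of `n` under these weights, which is positive because two of the weights are nonzero.
-/

open Real Filter Topology
open scoped Nat

def EntireCoeffs (c : ℕ → ℝ) : Prop :=
  ∀ r : ℝ, 0 ≤ r → Summable fun n => |c n| * r ^ n

noncomputable def powSum (c : ℕ → ℝ) (u : ℝ) : ℝ :=
  ∑' n, c n * u ^ n

noncomputable def powSumMean (c : ℕ → ℝ) (u : ℝ) : ℝ :=
  powSum (fun n => n * c n) u / powSum c u

namespace EntireCoeffs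

variable {c : ℕ → ℝ}

theorem summable (hc : EntireCoeffs c) (u : ℝ) : Summable fun n => c n * u ^ n :=
  .of_norm_bounded (hc |u| (abs_nonneg u)) fun n => by
    rw [norm_mul, norm_pow, Real.norm_eq_abs, Real.norm_eq_abs]

theorem natMul (hc : EntireCoeffs c) : EntireCoeffs fun n => n * c n := by
  intro r hr
  refine .of_nonneg_of_le (fun n => by positivity) (fun n => ?_) (hc (2 * r + 1) (by positivity))
  have hn : (n : ℝ) ≤ 2 ^ n := by exact_mod_cast Nat.lt_two_pow_self.le
  calc |n * c n| * r ^ n = |c n| * (n * r ^ n) := by rw [abs_mul, Nat.abs_cast]; ring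
    _ ≤ |c n| * (2 * r + 1) ^ n := by
      gcongr
      calc (n : ℝ) * r ^ n ≤ 2 ^ n * r ^ n := by gcongr
        _ = (2 * r) ^ n := (mul_pow 2 r n).symm
        _ ≤ (2 * r + 1) ^ n := by gcongr; linarith

theorem succ_mul_succ (hc : EntireCoeffs c) : EntireCoeffs fun n => (n + 1) * c (n + 1) := by
  intro r hr
  refine .of_nonneg_of_le (fun n => by positivity) (fun n => ?_)
    ((summable_nat_add_iff 1).mpr (hc.natMul (r + 1) (by positivity)))
  push_cast
  gcongr
  calc r ^ n ≤ (r + 1) ^ n := by gcongr; linarith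
    _ ≤ (r + 1) ^ (n + 1) := pow_le_pow_right₀ (by linarith) n.le_succ

theorem hasDerivAt_powSum (hc : EntireCoeffs c) (u : ℝ) :
    HasDerivAt (powSum c) (powSum (fun n => (n + 1) * c (n + 1)) u) u := by
  have hsplit : powSum c = fun v => c 0 + ∑' n, c (n + 1) * v ^ (n + 1) := by
    funext v
    rw [powSum, (hc.summable v).tsum_eq_zero_add, pow_zero, mul_one]
  rw [hsplit]
  set R := |u| + 1
  have hball : ∀ y ∈ Metric.ball (0 : ℝ) R, |y| ≤ R := fun y hy => by
    rw [Metric.mem_ball, Real.dist_eq, sub_zero] at hy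
    exact hy.le
  have hderiv : ∀ (n : ℕ) (y : ℝ), HasDerivAt (fun v => c (n + 1) * v ^ (n + 1))
      ((n + 1) * c (n + 1) * y ^ n) y := fun n y =>
    ((hasDerivAt_pow (n + 1) y).const_mul (c (n + 1))).congr_deriv (by
      rw [Nat.add_sub_cancel]; push_cast; ring)
  have hbound : ∀ (n : ℕ), ∀ y ∈ Metric.ball (0 : ℝ) R,
      ‖(n + 1) * c (n + 1) * y ^ n‖ ≤ |(n + 1) * c (n + 1)| * R ^ n := fun n y hy => by
    rw [norm_mul, norm_pow, Real.norm_eq_abs, Real.norm_eq_abs]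
    gcongr
    exact hball y hy
  have hu : u ∈ Metric.ball (0 : ℝ) R := by
    rw [Metric.mem_ball, Real.dist_eq, sub_zero]
    linarith
  exact (hasDerivAt_tsum_of_isPreconnected (hc.succ_mul_succ R (by positivity))
    Metric.isOpen_ball (convex_ball 0 R).isPreconnected (fun n y _ => hderiv n y) hbound
    (Metric.mem_ball_self (by positivity)) ((hc.summable 0).comp_injective (add_left_injective 1))
    hu).const_add _

theorem mul_powSum_succ_mul_succ (hc : EntireCoeffs c) (u : ℝ) :
    u * powSum (fun n => (n + 1) * c (n + 1)) u = powSum (fun n => n * c n) u := by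
  rw [powSum, powSum, (hc.natMul.summable u).tsum_eq_zero_add, ← tsum_mul_left]
  simp only [CharP.cast_eq_zero, zero_mul, pow_zero, mul_one, zero_add, Nat.cast_add, Nat.cast_one]
  congr 1
  funext n
  ring

theorem hasDerivAt_powSum_of_ne_zero (hc : EntireCoeffs c) {u : ℝ} (hu : u ≠ 0) :
    HasDerivAt (powSum c) (powSum (fun n => n * c n) u / u) u := by
  rw [← hc.mul_powSum_succ_mul_succ u, mul_div_cancel_left₀ _ hu]
  exact hc.hasDerivAt_powSum u

end EntireCoeffs

theorem sq_tsum_mul_lt_tsum_mul_tsum_mul_sq {ι : Type*} {w f : ι → ℝ} (hw : ∀ k, 0 ≤ w k)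
    (h0 : Summable w) (h1 : Summable fun k => w k * f k)
    (h2 : Summable fun k => w k * f k ^ 2) {i j : ι} (hi : 0 < w i) (hj : 0 < w j)
    (hij : f i ≠ f j) :
    (∑' k, w k * f k) ^ 2 < (∑' k, w k) * ∑' k, w k * f k ^ 2 := by
  set A := ∑' k, w k
  set B := ∑' k, w k * f k
  set C := ∑' k, w k * f k ^ 2
  have hA : 0 < A := h0.tsum_pos hw i hi
  set m := B / A
  have hexpand : ∀ k, w k * (f k - m) ^ 2 = w k * f k ^ 2 - 2 * m * (w k * f k) + m ^ 2 * w k :=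
    fun k => by ring
  have hsummable : Summable fun k => w k * (f k - m) ^ 2 := by
    simp_rw [hexpand]
    exact (h2.sub (h1.mul_left _)).add (h0.mul_left _)
  have hvariance : ∑' k, w k * (f k - m) ^ 2 = C - 2 * m * B + m ^ 2 * A := by
    simp_rw [hexpand]
    rw [(h2.sub (h1.mul_left _)).tsum_add (h0.mul_left _), h2.tsum_sub (h1.mul_left _),
      tsum_mul_left, tsum_mul_left]
  obtain ⟨k, hk, hkm⟩ : ∃ k, 0 < w k ∧ f k ≠ m := by
    by_cases h : f i = m
    · exact ⟨j, hj, fun h' => hij (h.trans h'.symm)⟩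
    · exact ⟨i, hi, h⟩
  have hpos : 0 < C - 2 * m * B + m ^ 2 * A := by
    rw [← hvariance]
    exact hsummable.tsum_pos (fun k => by have := hw k; positivity) k
      (mul_pos hk (pow_two_pos_of_ne_zero (sub_ne_zero.mpr hkm)))
  have hAm : A * (C - 2 * m * B + m ^ 2 * A) = A * C - B ^ 2 := by
    simp only [m]
    field_simp
    ring
  nlinarith [mul_pos hA hpos]

namespace EntireCoeffs

variable {c : ℕ → ℝ} (hc : EntireCoeffs c) (hc_nonneg : ∀ n, 0 ≤ c n)
include hc hc_nonneg

theorem powSum_pos (hc0 : 0 < c 0) {u : ℝ} (hu : 0 ≤ u) : 0 < powSum c u :=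
  (hc.summable u).tsum_pos (fun n => by have := hc_nonneg n; positivity) 0 (by simpa using hc0)

theorem hasDerivAt_log_powSum (hc0 : 0 < c 0) {u : ℝ} (hu : 0 < u) :
    HasDerivAt (fun v => log (powSum c v)) (powSumMean c u / u) u := by
  convert (hc.hasDerivAt_powSum_of_ne_zero hu.ne').log (hc.powSum_pos hc_nonneg hc0 hu.le).ne'
    using 1
  rw [powSumMean]
  ring

theorem sq_powSum_natMul_lt (hc0 : 0 < c 0) (hc1 : 0 < c 1) {u : ℝ} (hu : 0 < u) :
    powSum (fun n => n * c n) u ^ 2 < powSum c u * powSum (fun n => n * (n * c n)) u := by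
  have hw : ∀ n, 0 ≤ c n * u ^ n := fun n => by have := hc_nonneg n; positivity
  have key := sq_tsum_mul_lt_tsum_mul_tsum_mul_sq (f := fun n : ℕ => (n : ℝ)) hw (hc.summable u)
    ((hc.natMul.summable u).congr fun n => by ring)
    ((hc.natMul.natMul.summable u).congr fun n => by ring)
    (i := 0) (j := 1) (by simpa using hc0) (by simpa using mul_pos hc1 hu) (by simp)
  simp only [powSum]
  convert key using 3 <;> exact funext fun n => by ring

theorem exists_hasDerivAt_powSumMean_pos (hc0 : 0 < c 0) (hc1 : 0 < c 1) {u : ℝ}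
    (hu : 0 < u) : ∃ d, 0 < d ∧ HasDerivAt (powSumMean c) d u := by
  have hF := hc.powSum_pos hc_nonneg hc0 hu.le
  refine ⟨_, ?_, (hc.natMul.hasDerivAt_powSum_of_ne_zero hu.ne').div
    (hc.hasDerivAt_powSum_of_ne_zero hu.ne') hF.ne'⟩
  have key := hc.sq_powSum_natMul_lt hc_nonneg hc0 hc1 hu
  refine div_pos ?_ (by positivity)
  convert div_pos (sub_pos.mpr key) hu using 1
  ring

end EntireCoeffs

theorem factorial_mul_Gamma_le_Gamma_nat_add {s : ℝ} (hs : 1 ≤ s) (n : ℕ) :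
    n ! * Gamma s ≤ Gamma (n + s) := by
  induction n with
  | zero => simp
  | succ n ih =>
    rw [Nat.factorial_succ, Nat.cast_mul, Nat.cast_succ, add_right_comm,
      Gamma_add_one (by positivity), mul_assoc]
    gcongr

noncomputable def besselCoeff (α : ℝ) (n : ℕ) : ℝ :=
  2 ^ (-α) / (4 ^ n * n ! * Gamma (n + α + 1))

theorem besselCoeff_pos {α : ℝ} (hα : -1 < α) (n : ℕ) : 0 < besselCoeff α n := by
  have := Gamma_pos_of_pos (show 0 < (n : ℝ) + α + 1 by linarith [n.cast_nonneg (α := ℝ)])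
  unfold besselCoeff
  positivity

theorem entireCoeffs_besselCoeff {α : ℝ} (hα : 0 ≤ α) : EntireCoeffs (besselCoeff α) := by
  intro r hr
  have hΓ : 0 < Gamma (α + 1) := Gamma_pos_of_pos (by linarith)
  refine .of_nonneg_of_le (fun n => by positivity) (fun n => ?_)
    ((Real.summable_pow_div_factorial r).mul_left (2 ^ (-α) / Gamma (α + 1)))
  have hden : n ! * Gamma (α + 1) ≤ 4 ^ n * n ! * Gamma (n + α + 1) := by
    have h := factorial_mul_Gamma_le_Gamma_nat_add (s := α + 1) (by linarith) n
    rw [← add_assoc] at h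
    have h4 : (1 : ℝ) ≤ 4 ^ n := one_le_pow₀ (by norm_num)
    have hfac : (1 : ℝ) ≤ n ! := by exact_mod_cast n.factorial_pos
    calc (n ! : ℝ) * Gamma (α + 1) = 1 * 1 * (n ! * Gamma (α + 1)) := by ring
      _ ≤ 4 ^ n * n ! * Gamma (n + α + 1) := by gcongr
  rw [abs_of_pos (besselCoeff_pos (by linarith) n), besselCoeff]
  calc 2 ^ (-α) / (4 ^ n * n ! * Gamma (n + α + 1)) * r ^ n
      ≤ 2 ^ (-α) / (n ! * Gamma (α + 1)) * r ^ n := by gcongr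
    _ = 2 ^ (-α) / Gamma (α + 1) * (r ^ n / n !) := by ring

theorem hA_eq_powSum (α z : ℝ) : hA α z = powSum (besselCoeff α) (z ^ 2) := by
  rw [hA, powSum, ← tsum_mul_left]
  refine tsum_congr fun n => ?_
  rw [besselCoeff, pow_mul, div_pow, div_pow]
  ring

theorem qK_eq_powSum (α t : ℝ) {x y : ℝ} (hxy : 0 ≤ x * y) :
    qK α t x y = 1 / 2 * t ^ (-α - 1) * y ^ α * exp (-(x + y) / (2 * t)) *
      powSum (besselCoeff α) (x * y / t ^ 2) := by
  rw [qK, hA_eq_powSum, div_pow, sq_sqrt hxy]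

theorem hasDerivAt_log_qK {α t x y : ℝ} (hα : 0 ≤ α) (ht : 0 < t) (hx : 0 < x) (hy : 0 < y) :
    HasDerivAt (fun y' => log (qK α t x y'))
      (α / y - 1 / (2 * t) + powSumMean (besselCoeff α) (x * y / t ^ 2) / y) y := by
  have hc := entireCoeffs_besselCoeff hα
  have hc_nonneg := fun n => (besselCoeff_pos (α := α) (by linarith) n).le
  have hc0 := besselCoeff_pos (α := α) (by linarith) 0
  have hlog : (fun y' => log (qK α t x y')) =ᶠ[𝓝 y] fun y' => log (1 / 2 * t ^ (-α - 1)) +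
      α * log y' + -(x + y') / (2 * t) + log (powSum (besselCoeff α) (x * y' / t ^ 2)) := by
    filter_upwards [eventually_gt_nhds hy] with y' hy'
    have hF := hc.powSum_pos hc_nonneg hc0 (u := x * y' / t ^ 2) (by positivity)
    rw [qK_eq_powSum α t (by positivity), log_mul (by positivity) hF.ne',
      log_mul (by positivity) (exp_pos _).ne', log_mul (by positivity) (by positivity), log_exp,
      log_rpow hy']
  have hu : HasDerivAt (fun y' => x * y' / t ^ 2) (x / t ^ 2) y := by
    simpa using ((hasDerivAt_id y).const_mul x).div_const (t ^ 2)
  have hderiv : HasDerivAt (fun y' => log (1 / 2 * t ^ (-α - 1)) + α * log y' +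
      -(x + y') / (2 * t) + log (powSum (besselCoeff α) (x * y' / t ^ 2)))
      (α * y⁻¹ + -1 / (2 * t) +
        powSumMean (besselCoeff α) (x * y / t ^ 2) / (x * y / t ^ 2) * (x / t ^ 2)) y :=
    ((((hasDerivAt_log hy.ne').const_mul α).const_add _).add
      (((hasDerivAt_id y).const_add x).neg.div_const (2 * t))).add
      ((hc.hasDerivAt_log_powSum hc_nonneg hc0 (by positivity)).comp y hu)
  refine (hderiv.congr_deriv ?_).congr_of_eventuallyEq hlog
  field_simp
  ring

/-- For `α ≥ 0`, `t > 0` and `x, y > 0`, the mixed second partial derivative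
`∂²/∂x∂y log q_t(x,y)` is strictly positive. -/
theorem stmt4 (α : ℝ) (hα : 0 ≤ α) (t : ℝ) (ht : 0 < t)
    (x y : ℝ) (hx : 0 < x) (hy : 0 < y) :
    0 < deriv (fun x' => deriv (fun y' => Real.log (qK α t x' y')) y) x := by
  have hinner : (fun x' => deriv (fun y' => log (qK α t x' y')) y) =ᶠ[𝓝 x]
      fun x' => α / y - 1 / (2 * t) + powSumMean (besselCoeff α) (x' * y / t ^ 2) / y := by
    filter_upwards [eventually_gt_nhds hx] with x' hx'
    exact (hasDerivAt_log_qK hα ht hx' hy).deriv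
  obtain ⟨d, hd, hmean⟩ := (entireCoeffs_besselCoeff hα).exists_hasDerivAt_powSumMean_pos
    (fun n => (besselCoeff_pos (by linarith) n).le) (besselCoeff_pos (by linarith) 0)
    (besselCoeff_pos (by linarith) 1) (u := x * y / t ^ 2) (by positivity)
  have hu : HasDerivAt (fun x' => x' * y / t ^ 2) (y / t ^ 2) x := by
    simpa using ((hasDerivAt_id x).mul_const y).div_const (t ^ 2)
  have hchain : HasDerivAt
      (fun x' => α / y - 1 / (2 * t) + powSumMean (besselCoeff α) (x' * y / t ^ 2) / y)
      (d * (y / t ^ 2) / y) x :=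
    ((hmean.comp x hu).div_const y).const_add _
  rw [hinner.deriv_eq, hchain.deriv]
  positivity
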